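/- Let P ≥ 1 be an integer and let h⁰ ∈ ℓ^∞(ℤ) satisfy h⁰_{j+P} = h⁰_j for all j ∈ ℤ. Let h : [0,∞) → ℓ^∞(ℤ) be the unique bounded C¹ solution of the discrete heat equation with h(0)=h⁰, and let h̄ = (1/P) Σ_{j=0}^{P−1} h⁰_j. Then lim_{t→∞} sup_{j∈ℤ} |h_j(t) − h̄| = 0. -/

import Mathlib

open Filter Topology Set

noncomputable section

/-- Right-hand side of the discrete heat equation on `ℤ`. -/
def heatRHS (h : ℤ → ℝ) (j : ℤ) : ℝ := h (j + 1) + h (j - 1) - 2 * h j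

/-!
Bounded solutions are unique: the difference `d` of two of them satisfies
`|d t j| ≤ B (4t)ⁿ / n!` for every `n` by Picard iteration. Hence the solution stays
`P`-periodic, and on one period the discrete Laplacian telescopes: the sum `∑ hⱼ` is conserved,
while the energy `∑ (hⱼ - h̄)²` decreases at rate `2 ∑ (∇h)²`. The discrete Poincaré inequality
bounds the energy by `P² ∑ (∇h)²`, so Grönwall gives decay like `exp (-2t / P²)`, uniformly in
`j` by periodicity.
-/

open Function

theorem Function.Periodic.sum_range_sub_eq_zero {M : Type*} [AddCommGroup M] {F : ℤ → M}
    {P : ℕ} (hF : Periodic F P) : ∑ k ∈ Finset.range P, (F (k + 1) - F k) = 0 := by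
  have := Finset.sum_range_sub (fun k : ℕ => F k) P
  push_cast at this
  rw [this, ← zero_add (P : ℤ), hF, sub_self]

theorem Function.Periodic.sq_le_sum_range_sq {v : ℤ → ℝ} {P : ℕ} (hv : Periodic v P)
    (hP : 0 < P) (j : ℤ) : v j ^ 2 ≤ ∑ k ∈ Finset.range P, v k ^ 2 := by
  have hP' : (0 : ℤ) < P := by exact_mod_cast hP
  obtain ⟨k, hk⟩ := Int.eq_ofNat_of_zero_le (Int.emod_nonneg j hP'.ne')
  have hkP : k < P := by have := Int.emod_lt_of_pos j hP'; omega
  have hvj : v j = v k := by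
    have := hv.sub_int_mul_eq (x := j) (j / P)
    rw [Int.cast_id, mul_comm] at this
    rw [← hk, Int.emod_def, this]
  rw [hvj]
  exact Finset.single_le_sum (f := fun i : ℕ => v i ^ 2) (fun _ _ => sq_nonneg _)
    (Finset.mem_range.2 hkP)

theorem sum_range_heatRHS_eq_zero {v : ℤ → ℝ} {P : ℕ} (hv : Periodic v P) :
    ∑ k ∈ Finset.range P, heatRHS v k = 0 := by
  have hg : Periodic (fun j => v j - v (j - 1)) P := fun j => by
    simp only [add_sub_right_comm j (P : ℤ) 1, hv j, hv (j - 1)]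
  rw [← hg.sum_range_sub_eq_zero]
  refine Finset.sum_congr rfl fun k _ => ?_
  simp only [heatRHS, add_sub_cancel_right]
  ring

theorem sum_range_mul_heatRHS {v : ℤ → ℝ} {P : ℕ} (hv : Periodic v P) :
    ∑ k ∈ Finset.range P, v k * heatRHS v k
      = -∑ k ∈ Finset.range P, (v (k + 1) - v k) ^ 2 := by
  have hsq : Periodic (fun j => v j ^ 2) P := fun j => by simp only [hv j]
  have hprod : Periodic (fun j => v j * v (j - 1)) P := fun j => by
    simp only [add_sub_right_comm j (P : ℤ) 1, hv j, hv (j - 1)]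
  -- `v Δv + (∇v)²` is a difference of two periodic functions, so it sums to zero over a period
  have hsummand : ∀ k : ℤ, v k * heatRHS v k + (v (k + 1) - v k) ^ 2
      = (v (k + 1) ^ 2 - v k ^ 2) - (v (k + 1) * v (k + 1 - 1) - v k * v (k - 1)) :=
    fun k => by
    simp only [heatRHS, add_sub_cancel_right]
    ring
  rw [eq_neg_iff_add_eq_zero, ← Finset.sum_add_distrib,
    Finset.sum_congr rfl fun (k : ℕ) _ => hsummand k, Finset.sum_sub_distrib]
  exact sub_eq_zero.2 (hsq.sum_range_sub_eq_zero.trans hprod.sum_range_sub_eq_zero.symm)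

theorem abs_le_sum_abs_sub_of_sum_eq_zero {v : ℕ → ℝ} {n : ℕ}
    (hv : ∑ k ∈ Finset.range n, v k = 0) {j : ℕ} (hj : j < n) :
    |v j| ≤ ∑ i ∈ Finset.range n, |v (i + 1) - v i| := by
  set S := ∑ i ∈ Finset.range n, |v (i + 1) - v i|
  have hdiff : ∀ k < n, |v j - v k| ≤ S := by
    intro k hk
    wlog hjk : j ≤ k generalizing j k
    · rw [abs_sub_comm]
      exact this hk j hj (le_of_not_ge hjk)
    calc |v j - v k| ≤ ∑ i ∈ Finset.Ico j k, dist (v i) (v (i + 1)) :=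
          dist_le_Ico_sum_dist v hjk
      _ = ∑ i ∈ Finset.Ico j k, |v (i + 1) - v i| :=
        Finset.sum_congr rfl fun i _ => by rw [dist_comm, Real.dist_eq]
      _ ≤ S := by
        refine Finset.sum_le_sum_of_subset_of_nonneg (fun i hi => ?_) fun _ _ _ => abs_nonneg _
        simp only [Finset.mem_Ico, Finset.mem_range] at hi ⊢
        omega
  have hn : (0 : ℝ) < n := by exact_mod_cast Nat.zero_lt_of_lt hj
  refine le_of_mul_le_mul_left ?_ hn
  calc n * |v j| = |∑ k ∈ Finset.range n, (v j - v k)| := by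
        rw [Finset.sum_sub_distrib, hv, sub_zero, Finset.sum_const, Finset.card_range,
          nsmul_eq_mul, abs_mul, Nat.abs_cast]
    _ ≤ ∑ k ∈ Finset.range n, |v j - v k| := Finset.abs_sum_le_sum_abs _ _
    _ ≤ ∑ k ∈ Finset.range n, S :=
        Finset.sum_le_sum fun k hk => hdiff k (Finset.mem_range.1 hk)
    _ = n * S := by simp

theorem sum_sq_le_sq_mul_sum_sq_sub_of_sum_eq_zero {v : ℕ → ℝ} {n : ℕ}
    (hv : ∑ k ∈ Finset.range n, v k = 0) :
    ∑ k ∈ Finset.range n, v k ^ 2 ≤ n ^ 2 * ∑ k ∈ Finset.range n, (v (k + 1) - v k) ^ 2 := by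
  set S := ∑ i ∈ Finset.range n, |v (i + 1) - v i|
  have hS : 0 ≤ S := Finset.sum_nonneg fun _ _ => abs_nonneg _
  calc ∑ k ∈ Finset.range n, v k ^ 2 ≤ ∑ k ∈ Finset.range n, S ^ 2 :=
        Finset.sum_le_sum fun k hk => sq_le_sq.2 <| (abs_of_nonneg hS).symm ▸
          abs_le_sum_abs_sub_of_sum_eq_zero hv (Finset.mem_range.1 hk)
    _ = n * S ^ 2 := by simp
    _ ≤ n * (n * ∑ k ∈ Finset.range n, (v (k + 1) - v k) ^ 2) := by
        gcongr
        simpa only [Finset.card_range, sq_abs] using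
          sq_sum_le_card_mul_sum_sq (s := Finset.range n) (f := fun i => |v (i + 1) - v i|)
    _ = n ^ 2 * ∑ k ∈ Finset.range n, (v (k + 1) - v k) ^ 2 := by ring

theorem abs_heatRHS_le {v : ℤ → ℝ} {M : ℝ} (hv : ∀ j, |v j| ≤ M) (j : ℤ) :
    |heatRHS v j| ≤ 4 * M := by
  have := abs_add_three (v (j + 1)) (v (j - 1)) (-(2 * v j))
  simp only [abs_neg, abs_mul, abs_two] at this
  rw [heatRHS, sub_eq_add_neg]
  linarith [hv (j + 1), hv (j - 1), hv j]

theorem integral_mul_pow_div_factorial (a C t : ℝ) (n : ℕ) :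
    ∫ s in (0 : ℝ)..t, a * (C * (a * s) ^ n / n.factorial)
      = C * (a * t) ^ (n + 1) / (n + 1).factorial := by
  have hint : ∀ s : ℝ,
      a * (C * (a * s) ^ n / n.factorial) = a ^ (n + 1) * C / n.factorial * s ^ n := fun s => by
    rw [mul_pow]; ring
  simp only [hint, intervalIntegral.integral_const_mul, integral_pow, Nat.factorial_succ]
  push_cast
  field_simp
  ring

def IsHeatSolution (u : ℝ → ℤ → ℝ) : Prop :=
  ∀ j : ℤ, ∀ t : ℝ, 0 ≤ t → HasDerivWithinAt (fun s => u s j) (heatRHS (u t) j) (Ici 0) t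

namespace IsHeatSolution

variable {u w : ℝ → ℤ → ℝ}

theorem sub (hu : IsHeatSolution u) (hw : IsHeatSolution w) :
    IsHeatSolution fun t j => u t j - w t j := fun j t ht =>
  ((hu j t ht).sub (hw j t ht)).congr_deriv (by simp only [heatRHS]; ring)

theorem sub_const (hu : IsHeatSolution u) (c : ℝ) : IsHeatSolution fun t j => u t j - c :=
  fun j t ht => ((hu j t ht).sub_const c).congr_deriv (by simp only [heatRHS]; ring)

theorem comp_add_right (hu : IsHeatSolution u) (c : ℤ) :
    IsHeatSolution fun t j => u t (j + c) := fun j t ht =>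
  (hu (j + c) t ht).congr_deriv (by simp only [heatRHS]; ring_nf)

theorem continuousOn (hu : IsHeatSolution u) (j : ℤ) : ContinuousOn (fun s => u s j) (Ici 0) :=
  fun t ht => (hu j t ht).continuousWithinAt

theorem continuousOn_heatRHS (hu : IsHeatSolution u) (j : ℤ) :
    ContinuousOn (fun s => heatRHS (u s) j) (Ici 0) :=
  ((hu.continuousOn (j + 1)).add (hu.continuousOn (j - 1))).sub
    (continuousOn_const.mul (hu.continuousOn j))

theorem eq_add_integral (hu : IsHeatSolution u) (j : ℤ) {t : ℝ} (ht : 0 ≤ t) :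
    u t j = u 0 j + ∫ s in (0 : ℝ)..t, heatRHS (u s) j := by
  rw [intervalIntegral.integral_eq_sub_of_hasDeriv_right_of_le ht
    ((hu.continuousOn j).mono Icc_subset_Ici_self)
    (fun s hs => (hu j s hs.1.le).mono fun y hy => (hs.1.trans hy).le)
    ((hu.continuousOn_heatRHS j).mono (uIcc_of_le ht ▸ Icc_subset_Ici_self)).intervalIntegrable]
  ring

theorem abs_le_pow_div_factorial (hu : IsHeatSolution u) {B : ℝ}
    (hB : ∀ t, 0 ≤ t → ∀ j, |u t j| ≤ B) (h0 : ∀ j, u 0 j = 0) (n : ℕ) :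
    ∀ t, 0 ≤ t → ∀ j, |u t j| ≤ B * (4 * t) ^ n / n.factorial := by
  induction n with
  | zero => simpa using hB
  | succ n ih =>
    intro t ht j
    rw [hu.eq_add_integral j ht, h0, zero_add, ← integral_mul_pow_div_factorial]
    refine intervalIntegral.norm_integral_le_of_norm_le (f := fun s => heatRHS (u s) j)
      (g := fun s => 4 * (B * (4 * s) ^ n / n.factorial)) ht
      (Eventually.of_forall fun s hs => abs_heatRHS_le (ih s hs.1.le) j)
      (Continuous.intervalIntegrable (by fun_prop) 0 t)

theorem eq_zero_of_bounded (hu : IsHeatSolution u) {B : ℝ}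
    (hB : ∀ t, 0 ≤ t → ∀ j, |u t j| ≤ B) (h0 : ∀ j, u 0 j = 0) {t : ℝ} (ht : 0 ≤ t) (j : ℤ) :
    u t j = 0 := by
  have hlim : Tendsto (fun n : ℕ => B * (4 * t) ^ n / n.factorial) atTop (𝓝 0) := by
    simpa only [mul_div_assoc, mul_zero] using
      (FloorSemiring.tendsto_pow_div_factorial_atTop (4 * t)).const_mul B
  exact abs_nonpos_iff.1 <|
    ge_of_tendsto' hlim fun n => hu.abs_le_pow_div_factorial hB h0 n t ht j

theorem periodic (hu : IsHeatSolution u) {B : ℝ} (hB : ∀ t, 0 ≤ t → ∀ j, |u t j| ≤ B) {c : ℤ}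
    (h0 : Periodic (u 0) c) {t : ℝ} (ht : 0 ≤ t) : Periodic (u t) c := fun j =>
  sub_eq_zero.1 <| ((hu.comp_add_right c).sub hu).eq_zero_of_bounded (B := 2 * B)
    (fun s hs i => (abs_sub _ _).trans (by linarith [hB s hs (i + c), hB s hs i]))
    (fun i => sub_eq_zero.2 (h0 i)) ht j

variable {P : ℕ}

theorem sum_range_eq (hu : IsHeatSolution u) (hper : ∀ t, 0 ≤ t → Periodic (u t) P)
    {t : ℝ} (ht : 0 ≤ t) : ∑ k ∈ Finset.range P, u t k = ∑ k ∈ Finset.range P, u 0 k := by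
  refine constant_of_has_deriv_right_zero
    ((continuousOn_finsetSum (Finset.range P) fun k _ => hu.continuousOn k).mono
      Icc_subset_Ici_self)
    (fun s hs => ?_) t ⟨ht, le_rfl⟩
  rw [← sum_range_heatRHS_eq_zero (hper s hs.1)]
  exact HasDerivWithinAt.fun_sum fun k _ => (hu k s hs.1).mono (Ici_subset_Ici.2 hs.1)

theorem hasDerivWithinAt_sum_sq (hu : IsHeatSolution u) (hper : ∀ t, 0 ≤ t → Periodic (u t) P)
    {t : ℝ} (ht : 0 ≤ t) :
    HasDerivWithinAt (fun s => ∑ k ∈ Finset.range P, u s k ^ 2)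
      (-2 * ∑ k ∈ Finset.range P, (u t (k + 1) - u t k) ^ 2) (Ici 0) t := by
  refine (HasDerivWithinAt.fun_sum fun (k : ℕ) _ => (hu k t ht).fun_pow 2).congr_deriv ?_
  norm_num [mul_assoc, ← Finset.mul_sum, sum_range_mul_heatRHS (hper t ht)]

theorem sum_sq_le_mul_exp (hu : IsHeatSolution u) (hP : 0 < P)
    (hper : ∀ t, 0 ≤ t → Periodic (u t) P) (hmean : ∑ k ∈ Finset.range P, u 0 k = 0)
    {t : ℝ} (ht : 0 ≤ t) :
    ∑ k ∈ Finset.range P, u t k ^ 2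
      ≤ (∑ k ∈ Finset.range P, u 0 k ^ 2) * Real.exp (-(2 / P ^ 2) * t) := by
  have hpoincare : ∀ s, 0 ≤ s → ∑ k ∈ Finset.range P, u s k ^ 2
      ≤ P ^ 2 * ∑ k ∈ Finset.range P, (u s (k + 1) - u s k) ^ 2 := fun s hs => by
    simpa only [Nat.cast_add, Nat.cast_one] using sum_sq_le_sq_mul_sum_sq_sub_of_sum_eq_zero
      (v := fun k : ℕ => u s k) ((hu.sum_range_eq hper hs).trans hmean)
  have hP2 : (0 : ℝ) < P ^ 2 := by positivity
  have := le_gronwallBound_of_liminf_deriv_right_le (ε := 0) (K := -(2 / P ^ 2)) (b := t)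
    (fun s hs =>
      (hu.hasDerivWithinAt_sum_sq hper hs.1).continuousWithinAt.mono Icc_subset_Ici_self)
    (fun s hs r hr => ((hu.hasDerivWithinAt_sum_sq hper hs.1).mono
      (Ici_subset_Ici.2 hs.1)).liminf_right_slope_le hr)
    le_rfl
    (fun s hs => by
      have := hpoincare s hs.1
      rw [add_zero, neg_mul, neg_mul, neg_le_neg_iff, div_mul_eq_mul_div, div_le_iff₀ hP2]
      linarith)
    t ⟨ht, le_rfl⟩
  rwa [gronwallBound_ε0, sub_zero] at this

theorem exists_abs_le (hu : IsHeatSolution u) (hP : 0 < P)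
    (hper : ∀ t, 0 ≤ t → Periodic (u t) P) (hmean : ∑ k ∈ Finset.range P, u 0 k = 0)
    {ε : ℝ} (hε : 0 < ε) : ∃ T, ∀ t, T ≤ t → ∀ j, |u t j| ≤ ε := by
  have hlim : Tendsto (fun t => (∑ k ∈ Finset.range P, u 0 k ^ 2) * Real.exp (-(2 / P ^ 2) * t))
      atTop (𝓝 0) := by
    have hc : -(2 / (P : ℝ) ^ 2) < 0 := neg_neg_of_pos (by positivity)
    simpa only [mul_zero, comp_apply, id_eq] using
      (Real.tendsto_exp_atBot.comp (tendsto_id.const_mul_atTop_of_neg hc)).const_mul _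
  obtain ⟨T, hT⟩ := eventually_atTop.1 (hlim.eventually (gt_mem_nhds (pow_pos hε 2)))
  refine ⟨max T 0, fun t ht j => abs_le_of_sq_le_sq ?_ hε.le⟩
  have ht0 : 0 ≤ t := (le_max_right T 0).trans ht
  calc u t j ^ 2 ≤ ∑ k ∈ Finset.range P, u t k ^ 2 := (hper t ht0).sq_le_sum_range_sq hP j
    _ ≤ (∑ k ∈ Finset.range P, u 0 k ^ 2) * Real.exp (-(2 / P ^ 2) * t) :=
      hu.sum_sq_le_mul_exp hP hper hmean ht0
    _ ≤ ε ^ 2 := (hT t ((le_max_left T 0).trans ht)).le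

end IsHeatSolution

theorem periodic_discrete_heat_converges_to_average_general
    (P : ℕ) (hP : 1 ≤ P) (h0 : ℤ → ℝ) (h : ℝ → ℤ → ℝ)
    (hper : ∀ j : ℤ, h0 (j + (P : ℤ)) = h0 j)
    (hinit : ∀ j : ℤ, h 0 j = h0 j)
    (hbdd : ∃ B : ℝ, ∀ t : ℝ, 0 ≤ t → ∀ j : ℤ, |h t j| ≤ B)
    (hsol : ∀ j : ℤ, ∀ t : ℝ, 0 ≤ t →
      HasDerivWithinAt (fun s => h s j) (heatRHS (h t) j) (Set.Ici (0 : ℝ)) t) :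
    ∀ ε : ℝ, 0 < ε → ∃ T : ℝ, ∀ t : ℝ, T ≤ t → ∀ j : ℤ,
      |h t j - (∑ k ∈ Finset.range P, h0 (k : ℤ)) / (P : ℝ)| ≤ ε := by
  intro ε hε
  obtain ⟨B, hB⟩ := hbdd
  have hu : IsHeatSolution h := hsol
  set hbar := (∑ k ∈ Finset.range P, h0 (k : ℤ)) / (P : ℝ)
  have hper_t : ∀ t, 0 ≤ t → Periodic (fun j => h t j - hbar) P := fun t ht j =>
    congrArg (· - hbar) (hu.periodic hB (fun j => by simp only [hinit, hper]) ht j)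
  have hmean : ∑ k ∈ Finset.range P, (h 0 k - hbar) = 0 := by
    have : (P : ℝ) ≠ 0 := by positivity
    simp only [hinit, Finset.sum_sub_distrib, Finset.sum_const, Finset.card_range, nsmul_eq_mul,
      hbar]
    field_simp
    ring
  exact (hu.sub_const hbar).exists_abs_le hP hper_t hmean hε

theorem periodic_discrete_heat_converges_to_average
    (P : ℕ) (hP : 1 ≤ P) (h0 : ℤ → ℝ) (h : ℝ → ℤ → ℝ)
    (hper : ∀ j : ℤ, h0 (j + (P : ℤ)) = h0 j)
    (hbdd0 : ∃ B : ℝ, ∀ j : ℤ, |h0 j| ≤ B)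
    (hinit : ∀ j : ℤ, h 0 j = h0 j)
    (hbdd : ∃ B : ℝ, ∀ t : ℝ, 0 ≤ t → ∀ j : ℤ, |h t j| ≤ B)
    (hsol : ∀ j : ℤ, ∀ t : ℝ, 0 ≤ t →
      HasDerivWithinAt (fun s => h s j) (heatRHS (h t) j) (Set.Ici (0 : ℝ)) t) :
    ∀ ε : ℝ, 0 < ε → ∃ T : ℝ, ∀ t : ℝ, T ≤ t → ∀ j : ℤ,
      |h t j - (∑ k ∈ Finset.range P, h0 (k : ℤ)) / (P : ℝ)| ≤ ε :=
  periodic_discrete_heat_converges_to_average_general P hP h0 h hper hinit hbdd hsol
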